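/- arXiv:0712.4027 — 8 statements merged into one kernel-verified Lean document; each statement's English description precedes it below -/
import Mathlib

section
/- Let p be a real polynomial in n variables that is homogeneous of degree d ≥ 1, let D ⊆ ℝⁿ be a homogeneous domain (x ∈ D implies γx ∈ D for every scalar γ ∈ ℝ), and suppose p_min,homo := inf { |p(x)| : x ∈ closure(D), ‖x‖₂ = 1 } > 0. Let p_comp be any real polynomial in n + k variables (x₁,…,xₙ, δ₁,…,δ_k) such that p_comp(x, 0) = p(x) for all x and such that, for each fixed δ, x ↦ p_comp(x, δ) is homogeneous of degree d in x (every monomial of p_comp has total degree exactly d in the x-variables). Then for every 0 < η < 1 there exists ε > 0 such that for all x ∈ D and all δ ∈ ℝᵏ with |δ_i| ≤ ε for every i, one has |p_comp(x, δ) − p(x)| ≤ η·|p(x)|. -/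
/-!
Write `K` for the unit vectors of `closure D`. Since `p(x) = p_comp(x, 0)` and `p_comp` is
homogeneous of degree `d` in `x`, both sides of the claimed inequality scale by `‖x‖ ^ d`, so it
suffices to prove it on `K`; nonzero points of `D` are rescaled into `K` because `D` is a cone, and
`x = 0` is `0 • u` for any `u ∈ K`, which exists because `p_min,homo > 0`. On the compact set `K`
the continuous error `p_comp(u, δ) - p_comp(u, 0)` tends to `0` uniformly as `δ → 0`, so it is
eventually below `η · p_min,homo ≤ η · |p(u)|`.
-/

open MvPolynomial Filter Topology

namespace MvPolynomial

variable {R σ τ : Type*} [CommSemiring R] [Fintype σ] [Fintype τ]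

theorem eval_sumElim_smul_left {q : MvPolynomial (σ ⊕ τ) R} {d : ℕ}
    (hq : ∀ m ∈ q.support, ∑ i, m (Sum.inl i) = d) (c : R) (x : σ → R) (y : τ → R) :
    eval (Sum.elim (c • x) y) q = c ^ d * eval (Sum.elim x y) q := by
  rw [eval_eq', eval_eq', Finset.mul_sum]
  refine Finset.sum_congr rfl fun m hm => ?_
  simp only [Fintype.prod_sum_type, Sum.elim_inl, Sum.elim_inr, Pi.smul_apply, smul_eq_mul,
    mul_pow, Finset.prod_mul_distrib, Finset.prod_pow_eq_pow_sum, hq m hm]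
  ring

end MvPolynomial

theorem eventually_forall_abs_eval_sumElim_sub_lt {σ τ : Type*} [Fintype σ] [Fintype τ]
    (q : MvPolynomial (σ ⊕ τ) ℝ) {K : Set (σ → ℝ)} (hK : IsCompact K) {r : ℝ} (hr : 0 < r) :
    ∀ᶠ δ in 𝓝 (0 : τ → ℝ), ∀ u ∈ K, |eval (Sum.elim u δ) q - eval (Sum.elim u 0) q| < r := by
  refine hK.eventually_forall_of_forall_eventually fun u _ => ?_
  have hcont : Continuous fun z : (τ → ℝ) × (σ → ℝ) =>
      |eval (Sum.elim z.2 z.1) q - eval (Sum.elim z.2 0) q| := by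
    have hpair (f : (τ → ℝ) × (σ → ℝ) → τ → ℝ) (hf : Continuous f) :
        Continuous fun z => eval (Sum.elim z.2 (f z)) q :=
      (continuous_eval q).comp <| continuous_pi <| by
        rintro (i | j)
        exacts [(continuous_apply i).comp continuous_snd, (continuous_apply j).comp hf]
    exact ((hpair _ continuous_fst).sub (hpair _ continuous_const)).abs
  exact hcont.continuousAt.eventually_lt continuousAt_const (by simpa using hr)

theorem exists_pos_forall_abs_le_of_eventually_nhds_zero {τ : Type*} [Fintype τ]
    {P : (τ → ℝ) → Prop} (hP : ∀ᶠ δ in 𝓝 0, P δ) :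
    ∃ ε : ℝ, 0 < ε ∧ ∀ δ : τ → ℝ, (∀ i, |δ i| ≤ ε) → P δ := by
  obtain ⟨r, hr, hball⟩ := Metric.eventually_nhds_iff.mp hP
  refine ⟨r / 2, half_pos hr, fun δ hδ => hball ?_⟩
  rw [dist_zero_right]
  exact ((pi_norm_le_iff_of_nonneg (half_pos hr).le).mpr hδ).trans_lt (half_lt_self hr)

theorem exists_mem_sphere_eq_norm_smul {E : Type*} [NormedAddCommGroup E] [NormedSpace ℝ E]
    {D : Set E} (hD : ∀ x ∈ D, ∀ γ : ℝ, γ • x ∈ D)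
    (hne : {u | u ∈ closure D ∧ ‖u‖ = 1}.Nonempty)
    {x : E} (hx : x ∈ D) : ∃ u ∈ {u | u ∈ closure D ∧ ‖u‖ = 1}, x = ‖x‖ • u := by
  rcases eq_or_ne x 0 with rfl | hx0
  · obtain ⟨u, hu⟩ := hne
    exact ⟨u, hu, by simp⟩
  · refine ⟨‖x‖⁻¹ • x, ⟨subset_closure (hD x hx _), ?_⟩, ?_⟩
    · simp [norm_smul, hx0]
    · rw [smul_smul, mul_inv_cancel₀ (norm_ne_zero_iff.mpr hx0), one_smul]

theorem stmt1_general {n k d : ℕ}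
    (p : MvPolynomial (Fin n) ℝ)
    (D : Set (EuclideanSpace ℝ (Fin n)))
    (hDhom : ∀ x ∈ D, ∀ γ : ℝ, γ • x ∈ D)
    (hmin : 0 < sInf ((fun x : EuclideanSpace ℝ (Fin n) => |eval (fun i => x i) p|) ''
      {x : EuclideanSpace ℝ (Fin n) | x ∈ closure D ∧ ‖x‖ = 1}))
    (pcomp : MvPolynomial (Fin n ⊕ Fin k) ℝ)
    (hpc : ∀ x : Fin n → ℝ, eval (Sum.elim x 0) pcomp = eval x p)
    (hpchom : ∀ m ∈ pcomp.support, (∑ i : Fin n, m (Sum.inl i)) = d) :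
    ∀ η : ℝ, 0 < η → η < 1 →
      ∃ ε : ℝ, 0 < ε ∧ ∀ x ∈ D, ∀ δ : Fin k → ℝ, (∀ i, |δ i| ≤ ε) →
        |eval (Sum.elim (fun i => x i) δ) pcomp - eval (fun i => x i) p| ≤
          η * |eval (fun i => x i) p| := by
  intro η hη _
  set K := {x : EuclideanSpace ℝ (Fin n) | x ∈ closure D ∧ ‖x‖ = 1}
  set m := sInf ((fun x : EuclideanSpace ℝ (Fin n) => |eval (fun i => x i) p|) '' K)
  have hK : IsCompact K := by
    have hK_eq : K = closure D ∩ Metric.sphere 0 1 := by ext; simp [K]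
    exact hK_eq ▸ (isCompact_sphere 0 1).inter_left isClosed_closure
  have hK_ne : K.Nonempty := by
    by_contra h
    simp [m, Set.not_nonempty_iff_eq_empty.mp h] at hmin
  have hm_le : ∀ u ∈ K, m ≤ |eval (fun i => u i) p| := fun u hu =>
    csInf_le ⟨0, by rintro _ ⟨_, _, rfl⟩; positivity⟩ ⟨u, hu, rfl⟩
  obtain ⟨ε, hε, hsmall⟩ := exists_pos_forall_abs_le_of_eventually_nhds_zero <|
    eventually_forall_abs_eval_sumElim_sub_lt pcomp (hK.image (PiLp.continuous_ofLp 2 _))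
      (mul_pos hη hmin)
  refine ⟨ε, hε, fun x hx δ hδ => ?_⟩
  obtain ⟨u, hu, hxu⟩ := exists_mem_sphere_eq_norm_smul hDhom hK_ne hx
  have hscale : (fun i => x i) = ‖x‖ • fun i => u i := by
    conv_lhs => rw [hxu]
    rfl
  rw [← hpc, hscale, eval_sumElim_smul_left hpchom, eval_sumElim_smul_left hpchom, ← mul_sub,
    abs_mul, abs_mul, mul_left_comm]
  gcongr
  exact (hsmall δ hδ _ ⟨u, hu, rfl⟩).le.trans <| by gcongr; exact hpc _ ▸ hm_le u hu

/-- Accurate evaluation of a homogeneous polynomial on a homogeneous domain on which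
`|p|` is bounded away from zero on the unit sphere: any homogeneous-in-`x` algorithm output
`p_comp(x, δ)` agreeing with `p` at `δ = 0` achieves relative error at most `η` on `D`
once the machine precision `ε` is small enough. -/
theorem stmt1 {n k d : ℕ} (hd1 : 1 ≤ d)
    (p : MvPolynomial (Fin n) ℝ) (hphom : p.IsHomogeneous d)
    (D : Set (EuclideanSpace ℝ (Fin n)))
    (hDhom : ∀ x ∈ D, ∀ γ : ℝ, γ • x ∈ D)
    (hmin : 0 < sInf ((fun x : EuclideanSpace ℝ (Fin n) => |eval (fun i => x i) p|) ''
      {x : EuclideanSpace ℝ (Fin n) | x ∈ closure D ∧ ‖x‖ = 1}))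
    (pcomp : MvPolynomial (Fin n ⊕ Fin k) ℝ)
    (hpc : ∀ x : Fin n → ℝ, eval (Sum.elim x 0) pcomp = eval x p)
    (hpchom : ∀ m ∈ pcomp.support, (∑ i : Fin n, m (Sum.inl i)) = d) :
    ∀ η : ℝ, 0 < η → η < 1 →
      ∃ ε : ℝ, 0 < ε ∧ ∀ x ∈ D, ∀ δ : Fin k → ℝ, (∀ i, |δ i| ≤ ε) →
        |eval (Sum.elim (fun i => x i) δ) pcomp - eval (fun i => x i) p| ≤
          η * |eval (fun i => x i) p| :=
  stmt1_general p D hDhom hmin pcomp hpc hpchom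
end

section
/- Let p be a nonzero polynomial in n complex variables whose variety V(p) ⊆ ℂⁿ is allowable. Then p factors as p = c·∏_j p_j for some nonzero constant c ∈ ℂ, where each factor p_j is a power of a coordinate x_i, a power of a difference x_i − x_j, or a power of a sum x_i + x_j. -/
/-!
Since `p ≠ 0`, `V(p) ≠ ℂⁿ`, so each piece `⋂₀ G` of `V(p)` lies in an allowable hyperplane other
than `ℂⁿ`, the zero set of a linear form `x i`, `x i + x j` or `x i - x j` (`i ≠ j`). Hence a
product `q` of such forms vanishes on `V(p)`, and the Nullstellensatz gives `p ∣ q ^ m`.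
These forms are prime, being images of a variable under linear automorphisms, so by unique
factorization `p` is a unit, i.e. a nonzero constant, times a product of them.
-/

/-- An allowable hyperplane in `Kⁿ` is one of `{x : x i = 0}`, `{x : x i + x j = 0}`,
`{x : x i - x j = 0}`. -/
def IsAllowableHyperplane {K : Type*} [Ring K] {n : ℕ} (H : Set (Fin n → K)) : Prop :=
  (∃ i : Fin n, H = {x | x i = 0}) ∨
  (∃ i j : Fin n, H = {x | x i + x j = 0}) ∨
  (∃ i j : Fin n, H = {x | x i - x j = 0})

/-- A set is allowable if it is a finite union of finite (nonempty) intersections of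
allowable hyperplanes. -/
def IsAllowable {K : Type*} [Ring K] {n : ℕ} (A : Set (Fin n → K)) : Prop :=
  ∃ 𝒢 : Finset (Finset (Set (Fin n → K))),
    (∀ G ∈ 𝒢, G.Nonempty ∧ ∀ H ∈ G, IsAllowableHyperplane H) ∧
    A = ⋃ G ∈ 𝒢, ⋂₀ (G : Set (Set (Fin n → K)))

open MvPolynomial

theorem exists_eq_unit_mul_prod_of_dvd_pow_prod {α : Type*} [CommMonoidWithZero α]
    [UniqueFactorizationMonoid α] {s : Finset α} (hs : ∀ q ∈ s, Prime q)
    {m : ℕ} {a : α} (ha : a ≠ 0) (hdvd : a ∣ (∏ q ∈ s, q) ^ m) :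
    ∃ (u : α) (M : Multiset α), IsUnit u ∧ (∀ q ∈ M, q ∈ s) ∧ a = u * M.prod := by
  induction a using WfDvdMonoid.induction_on_irreducible with
  | zero => exact absurd rfl ha
  | unit u hu => exact ⟨u, 0, hu, by simp, by simp⟩
  | mul a q ha₀ hq ih =>
    obtain ⟨u, M, hu, hM, rfl⟩ := ih ha₀ (dvd_of_mul_left_dvd hdvd)
    obtain ⟨r, hr, hqr⟩ :=
      hq.prime.exists_mem_finset_dvd (hq.prime.dvd_of_dvd_pow (dvd_of_mul_right_dvd hdvd))
    obtain ⟨v, rfl⟩ := hq.associated_of_dvd (hs r hr).irreducible hqr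
    refine ⟨u * ↑v⁻¹, q * v ::ₘ M, hu.mul v⁻¹.isUnit, ?_, ?_⟩
    · simpa [Multiset.mem_cons] using ⟨hr, hM⟩
    · calc q * (u * M.prod) = q * (u * M.prod) * (↑v * ↑v⁻¹) := by simp
        _ = u * ↑v⁻¹ * (q * v ::ₘ M).prod := by rw [Multiset.prod_cons]; ac_rfl

namespace MvPolynomial

theorem exists_dvd_pow_of_forall_eval_eq_zero {k σ : Type*} [Field k] [IsAlgClosed k] [Finite σ]
    {p q : MvPolynomial σ k} (h : ∀ x, eval x p = 0 → eval x q = 0) : ∃ m, p ∣ q ^ m := by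
  have hq : q ∈ vanishingIdeal k (zeroLocus k (Ideal.span {p})) := by
    rw [mem_vanishingIdeal_iff]
    exact fun x hx => h x (hx p (Ideal.mem_span_singleton_self p))
  rw [vanishingIdeal_zeroLocus_eq_radical] at hq
  obtain ⟨m, hm⟩ := hq
  exact ⟨m, Ideal.mem_span_singleton.mp hm⟩

variable {R σ : Type*} [CommRing R] [IsDomain R]

theorem prime_X_add_C_mul_X {i j : σ} (hij : i ≠ j) (a : R) :
    Prime (X i + C a * X j : MvPolynomial σ R) := by
  classical
  let shear : R → MvPolynomial σ R →ₐ[R] MvPolynomial σ R :=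
    fun b => aeval (Function.update X i (X i + C b * X j))
  have shear_comp : ∀ b, (shear b).comp (shear (-b)) = AlgHom.id R _ := by
    intro b
    ext k
    rcases eq_or_ne k i with rfl | hk
    · simp [shear, hij.symm]
    · simp [shear, hk]
  let e : MvPolynomial σ R ≃ₐ[R] MvPolynomial σ R :=
    AlgEquiv.ofAlgHom (shear a) (shear (-a)) (shear_comp a) (by simpa using shear_comp (-a))
  have he : e (X i) = X i + C a * X j := by simp [e, shear]
  exact he ▸ (MulEquiv.prime_iff e).mpr X_prime

theorem prime_X_sub_X {i j : σ} (hij : i ≠ j) : Prime (X i - X j : MvPolynomial σ R) := by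
  simpa [sub_eq_add_neg] using prime_X_add_C_mul_X hij (-1 : R)

theorem prime_X_add_X (h2 : IsUnit (2 : R)) (i j : σ) : Prime (X i + X j : MvPolynomial σ R) := by
  rcases eq_or_ne i j with rfl | hij
  · rw [← two_mul, ← map_ofNat C]
    exact (associated_unit_mul_left (X i) _ (h2.map C)).symm.prime X_prime
  · simpa using prime_X_add_C_mul_X hij (1 : R)

end MvPolynomial

/-- `i ≠ j` in the middle case since `D_ii` is the whole space, not a hyperplane. -/
def IsAllowableForm {R σ : Type*} [CommRing R] (ℓ : MvPolynomial σ R) : Prop :=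
  (∃ i, ℓ = X i) ∨ (∃ i j, i ≠ j ∧ ℓ = X i - X j) ∨ (∃ i j, ℓ = X i + X j)

theorem IsAllowableForm.prime {R σ : Type*} [CommRing R] [IsDomain R] (h2 : IsUnit (2 : R))
    {ℓ : MvPolynomial σ R} (hℓ : IsAllowableForm ℓ) : Prime ℓ := by
  rcases hℓ with ⟨i, rfl⟩ | ⟨i, j, hij, rfl⟩ | ⟨i, j, rfl⟩
  · exact X_prime
  · exact prime_X_sub_X hij
  · exact prime_X_add_X h2 i j

section Allowable

variable {K : Type*} [CommRing K] {n : ℕ}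

theorem IsAllowableHyperplane.eq_univ_or_exists_form {H : Set (Fin n → K)}
    (hH : IsAllowableHyperplane H) :
    H = Set.univ ∨ ∃ ℓ : MvPolynomial (Fin n) K, IsAllowableForm ℓ ∧ H = {x | eval x ℓ = 0} := by
  rcases hH with ⟨i, rfl⟩ | ⟨i, j, rfl⟩ | ⟨i, j, rfl⟩
  · exact Or.inr ⟨X i, Or.inl ⟨i, rfl⟩, by simp⟩
  · exact Or.inr ⟨X i + X j, Or.inr (Or.inr ⟨i, j, rfl⟩), by simp⟩
  · rcases eq_or_ne i j with rfl | hij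
    · exact Or.inl (by simp)
    · exact Or.inr ⟨X i - X j, Or.inr (Or.inl ⟨i, j, hij, rfl⟩), by simp⟩

theorem exists_form_of_sInter_ne_univ {G : Set (Set (Fin n → K))}
    (hG : ∀ H ∈ G, IsAllowableHyperplane H) (hne : ⋂₀ G ≠ Set.univ) :
    ∃ ℓ : MvPolynomial (Fin n) K, IsAllowableForm ℓ ∧ ∀ x ∈ ⋂₀ G, eval x ℓ = 0 := by
  obtain ⟨H, hHG, hH⟩ : ∃ H ∈ G, H ≠ Set.univ := by
    simpa [Set.sInter_eq_univ] using hne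
  obtain ⟨ℓ, hℓ, rfl⟩ := (hG H hHG).eq_univ_or_exists_form.resolve_left hH
  exact ⟨ℓ, hℓ, fun x hx => Set.sInter_subset_of_mem hHG hx⟩

theorem IsAllowable.exists_forms_prod_eval_eq_zero {A : Set (Fin n → K)} (hA : IsAllowable A)
    (hne : A ≠ Set.univ) :
    ∃ s : Finset (MvPolynomial (Fin n) K),
      (∀ ℓ ∈ s, IsAllowableForm ℓ) ∧ ∀ x ∈ A, eval x (∏ ℓ ∈ s, ℓ) = 0 := by
  classical
  obtain ⟨𝒢, h𝒢, rfl⟩ := hA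
  have hforms : ∀ G ∈ 𝒢, ∃ ℓ : MvPolynomial (Fin n) K,
      IsAllowableForm ℓ ∧ ∀ x ∈ ⋂₀ (G : Set (Set (Fin n → K))), eval x ℓ = 0 := by
    intro G hG
    have hG_sub : ⋂₀ (G : Set (Set (Fin n → K))) ⊆ ⋃ G ∈ 𝒢, ⋂₀ (G : Set (Set (Fin n → K))) :=
      Set.subset_iUnion₂ (s := fun G (_ : G ∈ 𝒢) => ⋂₀ (G : Set (Set (Fin n → K)))) G hG
    exact exists_form_of_sInter_ne_univ (h𝒢 G hG).2 fun h =>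
      hne (Set.univ_subset_iff.mp (h ▸ hG_sub))
  choose! ℓ hℓ hℓ_zero using hforms
  refine ⟨𝒢.image ℓ, by simpa using hℓ, fun x hx => ?_⟩
  obtain ⟨G, hG, hxG⟩ := Set.mem_iUnion₂.mp hx
  rw [map_prod]
  exact Finset.prod_eq_zero (Finset.mem_image_of_mem ℓ hG) (hℓ_zero G hG x hxG)

end Allowable

/-- A nonzero complex polynomial whose variety is allowable factors as a nonzero constant
times a product of powers of coordinates `x i`, differences `x i - x j`, and sums
`x i + x j`. -/
theorem stmt4 {n : ℕ} (p : MvPolynomial (Fin n) ℂ) (hp : p ≠ 0)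
    (hall : IsAllowable {x : Fin n → ℂ | MvPolynomial.eval x p = 0}) :
    ∃ (c : ℂ) (m : ℕ) (f : Fin m → MvPolynomial (Fin n) ℂ) (e : Fin m → ℕ),
      c ≠ 0 ∧
      (∀ l : Fin m, 1 ≤ e l ∧
        ((∃ i, f l = MvPolynomial.X i) ∨
         (∃ i j, f l = MvPolynomial.X i - MvPolynomial.X j) ∨
         (∃ i j, f l = MvPolynomial.X i + MvPolynomial.X j))) ∧
      p = MvPolynomial.C c * ∏ l : Fin m, (f l) ^ (e l) := by
  have hV_ne : {x : Fin n → ℂ | eval x p = 0} ≠ Set.univ := fun h =>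
    hp (funext fun x => by simpa using Set.eq_univ_iff_forall.mp h x)
  obtain ⟨s, hs, hs_zero⟩ := hall.exists_forms_prod_eval_eq_zero hV_ne
  obtain ⟨m, hm⟩ := exists_dvd_pow_of_forall_eval_eq_zero hs_zero
  obtain ⟨u, M, hu, hM, rfl⟩ := exists_eq_unit_mul_prod_of_dvd_pow_prod
    (fun ℓ hℓ => (hs ℓ hℓ).prime (isUnit_iff_ne_zero.mpr two_ne_zero)) hp hm
  obtain ⟨c, hc, rfl⟩ := isUnit_iff_eq_C_of_isReduced.mp hu
  refine ⟨c, M.toList.length, fun l => M.toList[l], fun _ => 1, hc.ne_zero,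
    fun l => ⟨le_rfl, ?_⟩, by simp [Fin.prod_univ_getElem]⟩
  rcases hs _ (hM _ (Multiset.mem_toList.mp (List.getElem_mem l.2))) with h | ⟨i, j, -, h⟩ | h
  exacts [Or.inl h, Or.inr (Or.inl ⟨i, j, h⟩), Or.inr (Or.inr h)]
end

section
/- Let p ∈ ℝ[x₁,…,xₙ] be an irreducible polynomial whose real variety V(p) = {x ∈ ℝⁿ : p(x) = 0} is allowable. Then either p is a nonzero constant multiple of one of the linear forms x_i, x_i + x_j, or x_i − x_j (a linear form defining an allowable hyperplane), or p does not change sign on ℝⁿ, i.e., p(x)·p(y) ≥ 0 for all x, y ∈ ℝⁿ. -/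
/-!
Every piece of an allowable set is an intersection of allowable hyperplanes, hence a linear
subspace, of codimension `0`, `1` or at least `2`. Codimension `0` would force `p = 0`.
Codimension `1` means the piece is a single allowable hyperplane on which `p` vanishes; then its
linear form divides `p`, and irreducibility makes `p` a constant multiple of it. If every piece has
codimension at least `2`, the complement of `V(p)` is connected, since any two of its points are
joined through a generic third point by two segments missing `V(p)`; so the continuous function `p`,
having no zero there, has constant sign.
-/

namespace MvPolynomial

variable {R σ : Type*} [CommRing R]

theorem X_sub_dvd_sub_bind₁_update [DecidableEq σ] (i : σ) (q p : MvPolynomial σ R) :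
    X i - q ∣ p - bind₁ (Function.update X i q) p := by
  set I := Ideal.span {X i - q}
  rw [← Ideal.mem_span_singleton, ← Ideal.Quotient.eq]
  have hX : Ideal.Quotient.mkₐ R I (X i) = Ideal.Quotient.mkₐ R I q :=
    Ideal.Quotient.eq.mpr (Ideal.mem_span_singleton_self _)
  have h : (Ideal.Quotient.mkₐ R I).comp (bind₁ (Function.update X i q)) =
      Ideal.Quotient.mkₐ R I := by
    ext k
    rcases eq_or_ne k i with rfl | hk
    · simp [hX]
    · simp [hk]
  exact (congrArg (· p) h).symm

theorem X_sub_dvd_of_forall_eval_eq_zero [IsDomain R] [Infinite R] [DecidableEq σ] {i : σ}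
    {q p : MvPolynomial σ R} (hq : ∀ x v, eval (Function.update x i v) q = eval x q)
    (hp : ∀ x, x i = eval x q → eval x p = 0) : X i - q ∣ p := by
  have hsubst : bind₁ (Function.update X i q) p = 0 := by
    refine MvPolynomial.funext fun x => ?_
    have : (fun k => eval x (Function.update X i q k)) = Function.update x i (eval x q) := by
      ext k
      rcases eq_or_ne k i with rfl | hk <;> simp [*]
    rw [map_zero, show eval x (bind₁ _ p) = eval (fun k => eval x _) p from aeval_bind₁ x _ p,
      this]
    exact hp _ (by simp [hq])
  simpa [hsubst] using X_sub_dvd_sub_bind₁_update i q p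

theorem exists_eq_C_mul_of_dvd_of_irreducible [IsReduced R] {p ℓ : MvPolynomial σ R}
    (hp : Irreducible p) (hℓp : ℓ ∣ p) (hℓ : ¬IsUnit ℓ) : ∃ c, IsUnit c ∧ p = C c * ℓ := by
  obtain ⟨t, rfl⟩ := hℓp
  obtain ⟨c, hc, rfl⟩ :=
    isUnit_iff_eq_C_of_isReduced.mp ((hp.isUnit_or_isUnit rfl).resolve_left hℓ)
  exact ⟨c, hc, mul_comm _ _⟩

theorem exists_eq_C_mul_X_sub_of_irreducible {K : Type*} [Field K] [Infinite K] [DecidableEq σ]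
    {p q : MvPolynomial σ K} (hp : Irreducible p) {i : σ} (hq₀ : constantCoeff q = 0)
    (hq : ∀ x v, eval (Function.update x i v) q = eval x q)
    (hvan : ∀ x, x i = eval x q → eval x p = 0) : ∃ c : K, c ≠ 0 ∧ p = C c * (X i - q) := by
  have hnu : ¬IsUnit (X i - q) := fun hu => by simpa [hq₀] using hu.map constantCoeff
  obtain ⟨c, hc, hpc⟩ := exists_eq_C_mul_of_dvd_of_irreducible hp
    (X_sub_dvd_of_forall_eval_eq_zero hq hvan) hnu
  exact ⟨c, hc.ne_zero, hpc⟩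

end MvPolynomial

open MvPolynomial

theorem IsAllowableHyperplane.exists_submodule {K : Type*} [Ring K] {n : ℕ}
    {H : Set (Fin n → K)} (hH : IsAllowableHyperplane H) :
    ∃ S : Submodule K (Fin n → K), H = S := by
  rcases hH with ⟨i, rfl⟩ | ⟨i, j, rfl⟩ | ⟨i, j, rfl⟩
  · exact ⟨LinearMap.ker (LinearMap.proj i), rfl⟩
  · exact ⟨LinearMap.ker (LinearMap.proj (R := K) (φ := fun _ => K) i + LinearMap.proj j), rfl⟩
  · exact ⟨LinearMap.ker (LinearMap.proj (R := K) (φ := fun _ => K) i - LinearMap.proj j), rfl⟩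

theorem exists_eq_C_mul_of_isAllowableHyperplane_subset {K : Type*} [Field K] [CharZero K]
    {n : ℕ} {p : MvPolynomial (Fin n) K} (hp : Irreducible p) {H : Set (Fin n → K)}
    (hH : IsAllowableHyperplane H) (hne : H ≠ Set.univ) (hsub : H ⊆ {x | eval x p = 0}) :
    ∃ c : K, c ≠ 0 ∧
      ((∃ i, p = C c * X i) ∨ (∃ i j, p = C c * (X i + X j)) ∨
        (∃ i j, p = C c * (X i - X j))) := by
  rcases hH with ⟨i, rfl⟩ | ⟨i, j, rfl⟩ | ⟨i, j, rfl⟩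
  · obtain ⟨c, hc, hpc⟩ := exists_eq_C_mul_X_sub_of_irreducible hp (i := i) (q := 0)
      (by simp) (by simp) fun x hx => hsub (by simpa using hx)
    exact ⟨c, hc, .inl ⟨i, by simpa using hpc⟩⟩
  · rcases eq_or_ne i j with rfl | hij
    · obtain ⟨c, hc, hpc⟩ := exists_eq_C_mul_X_sub_of_irreducible hp (i := i) (q := 0)
        (by simp) (by simp) fun x hx => hsub (by simp_all)
      refine ⟨c / 2, by simpa using hc, .inr (.inl ⟨i, i, ?_⟩)⟩
      rw [hpc, sub_zero, ← two_mul, ← mul_assoc, ← map_ofNat C 2, ← C_mul,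
        div_mul_cancel₀ c two_ne_zero]
    · obtain ⟨c, hc, hpc⟩ := exists_eq_C_mul_X_sub_of_irreducible hp (i := i) (q := -X j)
        (by simp) (fun x v => by simp [Function.update_of_ne hij.symm])
        fun x hx => hsub (by simp [hx])
      exact ⟨c, hc, .inr (.inl ⟨i, j, by simpa using hpc⟩)⟩
  · rcases eq_or_ne i j with rfl | hij
    · exact absurd (by simp) hne
    · obtain ⟨c, hc, hpc⟩ := exists_eq_C_mul_X_sub_of_irreducible hp (i := i) (q := X j)
        (by simp) (fun x v => by simp [Function.update_of_ne hij.symm])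
        fun x hx => hsub (by simp [hx])
      exact ⟨c, hc, .inr (.inr ⟨i, j, hpc⟩)⟩

open Module

theorem Submodule.sInf_eq_top_or_mem_or_finrank_add_two_le {K E : Type*} [DivisionRing K]
    [AddCommGroup E] [Module K E] [FiniteDimensional K E] (𝒮 : Set (Submodule K E)) :
    sInf 𝒮 = ⊤ ∨ sInf 𝒮 ∈ 𝒮 ∨ finrank K ↥(sInf 𝒮) + 2 ≤ finrank K E := by
  by_contra! ⟨htop, hmem, hrank⟩
  obtain ⟨S, hS, hStop⟩ : ∃ S ∈ 𝒮, S ≠ ⊤ := by simpa [sInf_eq_top] using htop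
  have hle : sInf 𝒮 ≤ S := sInf_le hS
  have := Submodule.finrank_mono hle
  have := Submodule.finrank_lt hStop
  exact hmem (Submodule.eq_of_le_of_finrank_eq hle (by omega) ▸ hS)

theorem sInter_eq_univ_or_mem_or_finrank_add_two_le_of_isAllowableHyperplane {K : Type*}
    [Field K] {n : ℕ} {G : Set (Set (Fin n → K))} (hG : ∀ H ∈ G, IsAllowableHyperplane H) :
    ⋂₀ G = Set.univ ∨ ⋂₀ G ∈ G ∨
      ∃ W : Submodule K (Fin n → K), finrank K W + 2 ≤ n ∧ ⋂₀ G = W := by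
  set 𝒮 : Set (Submodule K (Fin n → K)) := {S | (S : Set (Fin n → K)) ∈ G}
  have hG𝒮 : ⋂₀ G = sInf 𝒮 := by
    have : SetLike.coe '' 𝒮 = G := Set.image_preimage_eq_of_subset fun H hH => by
      obtain ⟨S, rfl⟩ := (hG H hH).exists_submodule
      exact ⟨S, rfl⟩
    rw [Submodule.coe_sInf, ← Set.sInter_image, this]
  rw [hG𝒮]
  rcases Submodule.sInf_eq_top_or_mem_or_finrank_add_two_le 𝒮 with h | h | h
  · exact .inl (by simp [h])
  · exact .inr (.inl h)
  · exact .inr (.inr ⟨_, by simpa using h, rfl⟩)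

theorem Submodule.mem_sup_span_singleton_of_add_smul_sub_mem {K V : Type*} [DivisionRing K]
    [AddCommGroup V] [Module K V] {W : Submodule K V} {w z : V} {t : K} (ht : t ≠ 0)
    (h : w + t • (z - w) ∈ W) : z ∈ W ⊔ Submodule.span K {w} := by
  have hw : w ∈ W ⊔ Submodule.span K {w} :=
    Submodule.mem_sup_right (Submodule.mem_span_singleton_self w)
  have hz : z = t⁻¹ • (w + t • (z - w) - w) + w := by
    rw [add_sub_cancel_left, smul_smul, inv_mul_cancel₀ ht, one_smul, sub_add_cancel]
  rw [hz]
  exact add_mem (Submodule.smul_mem _ _ (sub_mem (Submodule.mem_sup_left h) hw)) hw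

section

variable {E : Type*} [AddCommGroup E] [Module ℝ E]

theorem exists_forall_notMem_sup_span_singleton [FiniteDimensional ℝ E] {ι : Type*} [Finite ι]
    {W : ι → Submodule ℝ E} (hW : ∀ k, finrank ℝ (W k) + 2 ≤ finrank ℝ E) {s : Set E}
    (hs : s.Finite) : ∃ z, ∀ k, ∀ w ∈ s, z ∉ W k ⊔ Submodule.span ℝ {w} := by
  have := hs.to_subtype
  by_contra! hcover
  obtain ⟨⟨k, w⟩, htop⟩ := Subspace.exists_eq_top_of_iUnion_eq_univ
    (p := fun kw : ι × s => W kw.1 ⊔ Submodule.span ℝ {(kw.2 : E)})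
    (Set.eq_univ_of_forall fun z => by simpa using hcover z)
  have hspan : finrank ℝ (Submodule.span ℝ {(w : E)}) ≤ 1 :=
    (finrank_span_le_card _).trans (by simp)
  have := Submodule.finrank_add_le_finrank_add_finrank (W k) (Submodule.span ℝ {(w : E)})
  rw [htop, finrank_top] at this
  have := hW k
  omega

theorem segment_subset_compl_of_notMem_sup_span_singleton {ι : Type*} {W : ι → Submodule ℝ E}
    {Z : Set E} (hZ : Z ⊆ ⋃ k, (W k : Set E)) {w z : E} (hw : w ∉ Z)
    (hz : ∀ k, z ∉ W k ⊔ Submodule.span ℝ {w}) : segment ℝ w z ⊆ Zᶜ := by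
  rw [segment_eq_image']
  rintro _ ⟨t, -, rfl⟩ hmem
  rcases eq_or_ne t 0 with rfl | ht
  · exact hw (by simpa using hmem)
  · obtain ⟨k, hk⟩ := Set.mem_iUnion.mp (hZ hmem)
    exact hz k (Submodule.mem_sup_span_singleton_of_add_smul_sub_mem ht hk)

variable [TopologicalSpace E] [ContinuousAdd E] [ContinuousSMul ℝ E] [FiniteDimensional ℝ E]

theorem isPreconnected_compl_of_subset_iUnion_finrank_add_two_le {ι : Type*} [Finite ι]
    {W : ι → Submodule ℝ E} (hW : ∀ k, finrank ℝ (W k) + 2 ≤ finrank ℝ E) {Z : Set E}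
    (hZ : Z ⊆ ⋃ k, (W k : Set E)) : IsPreconnected Zᶜ := by
  refine isPreconnected_of_forall_pair fun x hx y hy => ?_
  obtain ⟨z, hz⟩ := exists_forall_notMem_sup_span_singleton hW (Set.toFinite {x, y})
  refine ⟨segment ℝ x z ∪ segment ℝ z y, ?_, ?_, ?_, ?_⟩
  · refine Set.union_subset ?_ ?_
    · exact segment_subset_compl_of_notMem_sup_span_singleton hZ hx fun k => hz k x (by simp)
    · rw [segment_symm]
      exact segment_subset_compl_of_notMem_sup_span_singleton hZ hy fun k => hz k y (by simp)
  · exact .inl (left_mem_segment ℝ x z)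
  · exact .inr (right_mem_segment ℝ z y)
  · exact (convex_segment x z).isPreconnected.union z (right_mem_segment ℝ x z)
      (left_mem_segment ℝ z y) (convex_segment z y).isPreconnected

theorem mul_nonneg_of_zero_set_subset_iUnion_finrank_add_two_le {ι : Type*} [Finite ι]
    {W : ι → Submodule ℝ E} (hW : ∀ k, finrank ℝ (W k) + 2 ≤ finrank ℝ E) {f : E → ℝ}
    (hf : Continuous f) (hZ : {x | f x = 0} ⊆ ⋃ k, (W k : Set E)) (x y : E) :
    0 ≤ f x * f y := by
  have hconn := isPreconnected_compl_of_subset_iUnion_finrank_add_two_le hW hZ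
  have hvalue : ∀ a b, f a < 0 → 0 < f b → False := fun a b ha hb => by
    obtain ⟨c, hc, hc0⟩ := hconn.intermediate_value (f := f) ha.ne hb.ne' hf.continuousOn
      ⟨ha.le, hb.le⟩
    exact hc hc0
  by_contra! hneg
  rcases mul_neg_iff.mp hneg with ⟨hx, hy⟩ | ⟨hx, hy⟩
  · exact hvalue y x hy hx
  · exact hvalue x y hx hy

end

/-- An irreducible real polynomial with allowable real variety is either a nonzero constant
multiple of a linear form defining an allowable hyperplane, or does not change sign on `ℝⁿ`. -/
theorem stmt6 {n : ℕ} (p : MvPolynomial (Fin n) ℝ) (hirr : Irreducible p)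
    (hall : IsAllowable {x : Fin n → ℝ | MvPolynomial.eval x p = 0}) :
    (∃ c : ℝ, c ≠ 0 ∧
      ((∃ i, p = MvPolynomial.C c * MvPolynomial.X i) ∨
       (∃ i j, p = MvPolynomial.C c * (MvPolynomial.X i + MvPolynomial.X j)) ∨
       (∃ i j, p = MvPolynomial.C c * (MvPolynomial.X i - MvPolynomial.X j)))) ∨
    (∀ x y : Fin n → ℝ, 0 ≤ MvPolynomial.eval x p * MvPolynomial.eval y p) := by
  obtain ⟨𝒢, h𝒢, hV⟩ := hall
  by_cases hH : ∃ H, IsAllowableHyperplane H ∧ H ≠ Set.univ ∧ H ⊆ {x | eval x p = 0}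
  · obtain ⟨H, hH, hne, hsub⟩ := hH
    exact .inl (exists_eq_C_mul_of_isAllowableHyperplane_subset hirr hH hne hsub)
  have hcodim : ∀ G ∈ 𝒢, ∃ W : Submodule ℝ (Fin n → ℝ),
      finrank ℝ W + 2 ≤ n ∧ ⋂₀ (G : Set (Set (Fin n → ℝ))) = W := by
    intro G hG
    have hGV : ⋂₀ (G : Set (Set (Fin n → ℝ))) ⊆ {x | eval x p = 0} := fun x hx => by
      rw [hV]
      exact Set.mem_iUnion₂.mpr ⟨G, hG, hx⟩
    have hne : ⋂₀ (G : Set (Set (Fin n → ℝ))) ≠ Set.univ := fun huniv =>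
      hirr.ne_zero (MvPolynomial.funext fun x => by simpa using hGV (huniv ▸ Set.mem_univ x))
    rcases sInter_eq_univ_or_mem_or_finrank_add_two_le_of_isAllowableHyperplane (h𝒢 G hG).2
      with h | h | h
    · exact absurd h hne
    · exact absurd ⟨_, (h𝒢 G hG).2 _ h, hne, hGV⟩ hH
    · exact h
  choose W hW hGW using hcodim
  refine .inr (mul_nonneg_of_zero_set_subset_iUnion_finrank_add_two_le (ι := 𝒢)
    (W := fun G => W G.1 G.2) (fun G => by simpa using hW G.1 G.2) (continuous_eval p) ?_)
  rw [hV]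
  intro x hx
  obtain ⟨G, hG, hxG⟩ := Set.mem_iUnion₂.mp hx
  exact Set.mem_iUnion.mpr ⟨⟨G, hG⟩, hGW G hG ▸ hxG⟩
end

section
/- With the dominant-term setup below, suppose x⁰ ∈ ℝⁿ satisfies p_dom(x⁰) ≠ 0. Then lim_{t→0⁺} p_dom(x(t)) / p(x(t)) = 1 (in particular p(x(t)) ≠ 0 for all sufficiently small t > 0). -/
/-!
Along the curve `x(t)` a monomial `x^m` is multiplied by `t ^ W m`, so
`p(x(t)) = ∑ₘ aₘ t^(W m)` with `aₘ` the corresponding term of `p(x⁰)`, while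
`p_dom(x(t)) = t^d p_dom(x⁰)` exactly. Dividing by `t^d`, the sum becomes `∑ₘ aₘ t^(W m - d)`,
which is continuous at `t = 0` because all exponents are nonnegative, with value `p_dom(x⁰) ≠ 0`.
-/

open MvPolynomial Filter Topology

theorem Fin.sum_dite_val_lt {M : Type*} [AddCommMonoid M] {k n : ℕ} (hkn : k ≤ n) (g : Fin k → M) :
    ∑ j : Fin n, (if h : (j : ℕ) < k then g ⟨j, h⟩ else 0) = ∑ i : Fin k, g i := by
  set f : ℕ → M := fun j => if h : j < k then g ⟨j, h⟩ else 0
  calc ∑ j : Fin n, f j = ∑ j ∈ Finset.range n, f j := Fin.sum_univ_eq_sum_range f n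
    _ = ∑ j ∈ Finset.range k, f j :=
      (Finset.sum_subset (Finset.range_subset_range.2 hkn) fun j _ hj => by
        simp [f, Finset.mem_range.not.1 hj]).symm
    _ = ∑ i : Fin k, f i := (Fin.sum_univ_eq_sum_range f k).symm
    _ = ∑ i : Fin k, g i := by simp [f]

theorem MvPolynomial.eval_rpow_mul_monomial {σ : Type*} [Fintype σ] (e x : σ → ℝ) {t : ℝ} (ht : 0 < t)
    (m : σ →₀ ℕ) (c : ℝ) :
    eval (fun j => t ^ e j * x j) (monomial m c) = t ^ (∑ j, e j * m j) * eval x (monomial m c) := by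
  rw [eval_monomial, eval_monomial, Finsupp.prod_pow, Finsupp.prod_pow]
  simp only [mul_pow, Finset.prod_mul_distrib, ← Real.rpow_mul_natCast ht.le,
    ← Real.rpow_sum_of_pos ht]
  ring

theorem MvPolynomial.eval_rpow_mul {σ : Type*} [Fintype σ] (e x : σ → ℝ) {t : ℝ} (ht : 0 < t)
    (p : MvPolynomial σ ℝ) :
    eval (fun j => t ^ e j * x j) p =
      ∑ m ∈ p.support, eval x (monomial m (coeff m p)) * t ^ (∑ j, e j * m j) := by
  conv_lhs => rw [p.as_sum, map_sum]
  exact Finset.sum_congr rfl fun m _ => (eval_rpow_mul_monomial e x ht m _).trans (mul_comm _ _)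

section
variable {ι : Type*} (s : Finset ι) (a w : ι → ℝ) {d : ℝ}

theorem tendsto_sum_mul_rpow_sub (hd : ∀ i ∈ s, d ≤ w i) :
    Tendsto (fun t : ℝ => ∑ i ∈ s, a i * t ^ (w i - d)) (𝓝[>] 0)
      (𝓝 (∑ i ∈ s with w i = d, a i)) := by
  have hlim : Tendsto (fun t : ℝ => ∑ i ∈ s, a i * t ^ (w i - d)) (𝓝 0)
      (𝓝 (∑ i ∈ s, a i * (0 : ℝ) ^ (w i - d))) :=
    tendsto_finsetSum _ fun i hi =>
      ((Real.continuousAt_rpow_const 0 _ (Or.inr (sub_nonneg.2 (hd i hi)))).tendsto).const_mul _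
  convert hlim.mono_left nhdsWithin_le_nhds using 2
  rw [Finset.sum_filter]
  refine Finset.sum_congr rfl fun i _ => ?_
  by_cases h : w i = d
  · simp [h]
  · simp [h, Real.zero_rpow (sub_ne_zero.2 h)]

theorem sum_mul_rpow_eq_rpow_mul {t : ℝ} (ht : 0 < t) :
    ∑ i ∈ s, a i * t ^ w i = t ^ d * ∑ i ∈ s, a i * t ^ (w i - d) := by
  rw [Finset.mul_sum]
  refine Finset.sum_congr rfl fun i _ => ?_
  rw [Real.rpow_sub ht]
  field_simp

theorem sum_filter_mul_rpow_eq {t : ℝ} :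
    ∑ i ∈ s with w i = d, a i * t ^ w i = t ^ d * ∑ i ∈ s with w i = d, a i := by
  rw [Finset.mul_sum]
  refine Finset.sum_congr rfl fun i hi => ?_
  rw [(Finset.mem_filter.1 hi).2, mul_comm]

theorem eventually_sum_mul_rpow_ne_zero (hd : ∀ i ∈ s, d ≤ w i)
    (hA : ∑ i ∈ s with w i = d, a i ≠ 0) :
    ∀ᶠ t in 𝓝[>] (0 : ℝ), ∑ i ∈ s, a i * t ^ w i ≠ 0 := by
  filter_upwards [(tendsto_sum_mul_rpow_sub s a w hd).eventually_ne hA, self_mem_nhdsWithin]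
    with t hG ht
  rw [sum_mul_rpow_eq_rpow_mul s a w ht]
  exact mul_ne_zero (Real.rpow_pos_of_pos ht d).ne' hG

theorem tendsto_sum_filter_mul_rpow_div (hd : ∀ i ∈ s, d ≤ w i)
    (hA : ∑ i ∈ s with w i = d, a i ≠ 0) :
    Tendsto (fun t : ℝ => (∑ i ∈ s with w i = d, a i * t ^ w i) / ∑ i ∈ s, a i * t ^ w i)
      (𝓝[>] 0) (𝓝 1) := by
  have hlim := (tendsto_const_nhds (x := ∑ i ∈ s with w i = d, a i)).div
    (tendsto_sum_mul_rpow_sub s a w hd) hA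
  rw [div_self hA] at hlim
  refine hlim.congr' ?_
  filter_upwards [self_mem_nhdsWithin] with t ht
  rw [Pi.div_apply, sum_filter_mul_rpow_eq, sum_mul_rpow_eq_rpow_mul s a w ht,
    mul_div_mul_left _ _ (Real.rpow_pos_of_pos ht d).ne']

end

theorem stmt8_general {n k : ℕ} (hkn : k ≤ n)
    (p : MvPolynomial (Fin n) ℝ)
    (hsupp : p.support.Nonempty)
    (η : Fin k → ℝ)
    (W : (Fin n →₀ ℕ) → ℝ)
    (hW : ∀ m : Fin n →₀ ℕ, W m = ∑ i : Fin k, η i * (m (Fin.castLE hkn i) : ℝ))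
    (d : ℝ) (hd : d = p.support.inf' hsupp W)
    (pdom : MvPolynomial (Fin n) ℝ)
    (hpdom : pdom = ∑ m ∈ p.support.filter (fun m => W m = d),
        MvPolynomial.monomial m (MvPolynomial.coeff m p))
    (x0 : Fin n → ℝ)
    (hx0 : eval x0 pdom ≠ 0)
    (xt : ℝ → Fin n → ℝ)
    (hxt : ∀ t : ℝ, ∀ j : Fin n,
      xt t j = if h : (j : ℕ) < k then t ^ (η ⟨j, h⟩) * x0 j else x0 j) :
    Filter.Tendsto (fun t : ℝ => eval (xt t) pdom / eval (xt t) p)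
      (nhdsWithin 0 (Set.Ioi 0)) (nhds 1) ∧
    (∀ᶠ t in nhdsWithin (0 : ℝ) (Set.Ioi 0), eval (xt t) p ≠ 0) := by
  set e : Fin n → ℝ := fun j => if h : (j : ℕ) < k then η ⟨j, h⟩ else 0
  have hcurve : ∀ t, xt t = fun j => t ^ e j * x0 j := fun t => funext fun j => by
    rw [hxt]; split_ifs with h <;> simp [e, h]
  have hweight : ∀ m : Fin n →₀ ℕ, W m = ∑ j, e j * m j := fun m => by
    rw [hW, ← Fin.sum_dite_val_lt hkn]
    simp [e, dite_mul, Fin.castLE]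
  set a : (Fin n →₀ ℕ) → ℝ := fun m => eval x0 (monomial m (coeff m p))
  have hp : ∀ t > 0, eval (xt t) p = ∑ m ∈ p.support, a m * t ^ W m := fun t ht => by
    simp only [hcurve, eval_rpow_mul e x0 ht, hweight, a]
  have hpdom_curve : ∀ t > 0, eval (xt t) pdom = ∑ m ∈ p.support with W m = d, a m * t ^ W m :=
    fun t ht => by
      rw [hpdom, hcurve, map_sum]
      exact Finset.sum_congr rfl fun m _ => by rw [eval_rpow_mul_monomial e x0 ht, ← hweight, mul_comm]
  have hA : ∑ m ∈ p.support with W m = d, a m ≠ 0 := by simpa [hpdom, map_sum] using hx0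
  have hdle : ∀ m ∈ p.support, d ≤ W m := fun m hm => hd ▸ Finset.inf'_le W hm
  refine ⟨(tendsto_sum_filter_mul_rpow_div _ a W hdle hA).congr' ?_, ?_⟩
  · filter_upwards [self_mem_nhdsWithin] with t ht
    rw [hp t ht, hpdom_curve t ht]
  · filter_upwards [eventually_sum_mul_rpow_ne_zero _ a W hdle hA, self_mem_nhdsWithin] with t h ht
    rwa [hp t ht]

/-- If the dominant term does not vanish at `x⁰`, then along the weighted curve `x(t)` the
ratio `p_dom(x(t)) / p(x(t))` tends to `1` as `t → 0⁺`; in particular `p(x(t)) ≠ 0` for all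
sufficiently small `t > 0`. -/
theorem stmt8 {n k : ℕ} (hk1 : 1 ≤ k) (hkn : k ≤ n)
    (p : MvPolynomial (Fin n) ℝ)
    (hsupp : p.support.Nonempty)
    (η : Fin k → ℝ) (hη : ∀ i, 0 < η i)
    (W : (Fin n →₀ ℕ) → ℝ)
    (hW : ∀ m : Fin n →₀ ℕ, W m = ∑ i : Fin k, η i * (m (Fin.castLE hkn i) : ℝ))
    (d : ℝ) (hd : d = p.support.inf' hsupp W)
    (pdom : MvPolynomial (Fin n) ℝ)
    (hpdom : pdom = ∑ m ∈ p.support.filter (fun m => W m = d),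
        MvPolynomial.monomial m (MvPolynomial.coeff m p))
    (x0 : Fin n → ℝ)
    (hx0 : eval x0 pdom ≠ 0)
    (xt : ℝ → Fin n → ℝ)
    (hxt : ∀ t : ℝ, ∀ j : Fin n,
      xt t j = if h : (j : ℕ) < k then t ^ (η ⟨j, h⟩) * x0 j else x0 j) :
    Filter.Tendsto (fun t : ℝ => eval (xt t) pdom / eval (xt t) p)
      (nhdsWithin 0 (Set.Ioi 0)) (nhds 1) ∧
    (∀ᶠ t in nhdsWithin (0 : ℝ) (Set.Ioi 0), eval (xt t) p ≠ 0) :=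
  stmt8_general hkn p hsupp η W hW d hd pdom hpdom x0 hx0 xt hxt
end

section
/- Let n ≥ 1 and x₁,…,xₙ ∈ ℝ. Let T be the (2n+1)×(2n+1) tridiagonal matrix with all subdiagonal entries equal to 1, all superdiagonal entries equal to −1, and diagonal (x₁, x₂, …, x_{n−1}, xₙ, 0, −xₙ, −x_{n−1}, …, −x₂, −x₁). Then T is singular; moreover, the vector v = (1, p₁, p₂, …, p_{2n}), where p_i = det(T(1:i, 1:i)) denotes the i-th leading principal minor of T, is a nonzero right null vector of T, i.e., T·v = 0. -/
/-- The `(2n+1) × (2n+1)` tridiagonal matrix with subdiagonal `1`, superdiagonal `-1` and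
diagonal `(x₁, …, xₙ, 0, -xₙ, …, -x₁)` is singular, and the vector of its leading principal
minors `v = (1, p₁, …, p_{2n})` is a nonzero right null vector. -/
theorem stmt12 {n : ℕ} (hn : 1 ≤ n) (x : Fin n → ℝ)
    (T : Matrix (Fin (2 * n + 1)) (Fin (2 * n + 1)) ℝ)
    (hT : ∀ i j : Fin (2 * n + 1),
      T i j =
        if (i : ℕ) = (j : ℕ) + 1 then 1
        else if (j : ℕ) = (i : ℕ) + 1 then -1
        else if (i : ℕ) = (j : ℕ) then
          (if h1 : (i : ℕ) < n then x ⟨(i : ℕ), h1⟩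
           else if h2 : (i : ℕ) = n then 0
           else -x ⟨2 * n - (i : ℕ), by have := i.isLt; omega⟩)
        else 0)
    (v : Fin (2 * n + 1) → ℝ)
    (hv : ∀ i : Fin (2 * n + 1),
      v i = Matrix.det (Matrix.of fun a b : Fin (i : ℕ) =>
        T (Fin.castLE i.isLt.le a) (Fin.castLE i.isLt.le b))) :
    Matrix.det T = 0 ∧ v ≠ 0 ∧ T.mulVec v = 0 := by
  have hT0 : ∀ i j : Fin (2*n+1), (i:ℕ) ≠ (j:ℕ)+1 → (j:ℕ) ≠ (i:ℕ)+1 → (i:ℕ) ≠ (j:ℕ) → T i j = 0 := by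
    intro i j h1 h2 h3; rw [hT, if_neg h1, if_neg h2, if_neg h3]
  have hTsub : ∀ i j : Fin (2*n+1), (i:ℕ) = (j:ℕ)+1 → T i j = 1 := by
    intro i j h; rw [hT, if_pos h]
  have hTsup : ∀ i j : Fin (2*n+1), (j:ℕ) = (i:ℕ)+1 → T i j = -1 := by
    intro i j h; rw [hT, if_neg (by omega), if_pos h]
  -- determinant is zero, by antisymmetry under reversal
  have hdet : T.det = 0 := by
    have hdiag : ∀ i : Fin (2*n+1), T (Fin.rev i) (Fin.rev i) = - T i i := by
      intro i
      have hi := i.isLt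
      have hri : ((Fin.rev i) : ℕ) = 2*n - i := by rw [Fin.val_rev]; omega
      rw [hT, hT]
      rw [if_neg (by omega), if_neg (by omega), if_pos rfl,
          if_neg (by omega), if_neg (by omega), if_pos rfl]
      simp only [hri]
      rcases lt_trichotomy ((i:ℕ)) n with h | h | h
      · rw [dif_neg (by omega), dif_neg (by omega), dif_pos h]
        congr 1
        congr 1
        simp only [Fin.mk.injEq]
        omega
      · rw [dif_neg (by omega), dif_pos (by omega), dif_neg (by omega), dif_pos h]
        norm_num
      · rw [dif_pos (by omega), dif_neg (by omega), dif_neg (by omega)]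
        rw [neg_neg]
    have hrev : ∀ i j : Fin (2*n+1), T (Fin.rev i) (Fin.rev j) = - T i j := by
      intro i j
      have hi := i.isLt; have hj := j.isLt
      have hri : ((Fin.rev i) : ℕ) = 2*n - i := by rw [Fin.val_rev]; omega
      have hrj : ((Fin.rev j) : ℕ) = 2*n - j := by rw [Fin.val_rev]; omega
      by_cases h1 : (i:ℕ) = (j:ℕ) + 1
      · rw [hTsub _ _ h1, hTsup _ _ (by omega)]
      · by_cases h2 : (j:ℕ) = (i:ℕ) + 1
        · rw [hTsup _ _ h2, hTsub _ _ (by omega)]; norm_num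
        · by_cases h3 : (i:ℕ) = (j:ℕ)
          · have e : j = i := Fin.ext h3.symm
            rw [e]
            exact hdiag i
          · rw [hT0 _ _ h1 h2 h3, hT0 _ _ (by omega) (by omega) (by omega)]
            norm_num
    have h1 : (T.submatrix (Fin.revPerm : Equiv.Perm (Fin (2*n+1))) Fin.revPerm).det = T.det :=
      Matrix.det_submatrix_equiv_self _ _
    have h2 : T.submatrix (Fin.revPerm : Equiv.Perm (Fin (2*n+1))) Fin.revPerm = -T := by
      ext i j
      simp [Matrix.submatrix_apply, hrev]
    rw [h2, Matrix.det_neg] at h1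
    simp [Fintype.card_fin] at h1
    rw [pow_succ, pow_mul] at h1
    norm_num at h1
    linarith
  -- the sequence of leading principal minors
  have key : ∀ (k : ℕ) (hk : k + 2 ≤ 2*n+1) (hk1 : k+1 ≤ 2*n+1) (hk0 : k ≤ 2*n+1)
      (i1 : Fin (2*n+1)), (i1 : ℕ) = k + 1 →
      (Matrix.of fun a b : Fin (k+2) => T (Fin.castLE hk a) (Fin.castLE hk b)).det
      = T i1 i1 *
          (Matrix.of fun a b : Fin (k+1) => T (Fin.castLE hk1 a) (Fin.castLE hk1 b)).det
      + (Matrix.of fun a b : Fin k => T (Fin.castLE hk0 a) (Fin.castLE hk0 b)).det := by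
    intro k hk hk1 hk0 i1 hi1
    set A : Matrix (Fin (k+1+1)) (Fin (k+1+1)) ℝ :=
      Matrix.of fun a b : Fin (k+2) => T (Fin.castLE hk a) (Fin.castLE hk b) with hA
    rw [Matrix.det_succ_row A (Fin.last (k+1))]
    rw [← Finset.sum_subset (Finset.subset_univ
        ({⟨k, by omega⟩, Fin.last (k+1)} : Finset (Fin (k+2)))) ?_]
    · rw [Finset.sum_pair (by simp [Fin.ext_iff])]
      -- term j = ⟨k⟩
      have e1 : A (Fin.last (k+1)) ⟨k, by omega⟩ = 1 := by
        apply hTsub; simp [Fin.last]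
      have e2 : A (Fin.last (k+1)) (Fin.last (k+1)) = T i1 i1 := by
        show T _ _ = _
        congr 1 <;> apply Fin.ext <;> simp [Fin.last, hi1]
      have e3 : A.submatrix (Fin.last (k+1)).succAbove (Fin.last (k+1)).succAbove
          = Matrix.of fun a b : Fin (k+1) => T (Fin.castLE hk1 a) (Fin.castLE hk1 b) := by
        rw [Fin.succAbove_last]
        ext a b
        show T _ _ = T _ _
        congr 1 <;> apply Fin.ext <;> simp
      -- minor at column ⟨k⟩
      have e4 : (A.submatrix (Fin.last (k+1)).succAbove (⟨k, by omega⟩ : Fin (k+2)).succAbove).det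
          = -(Matrix.of fun a b : Fin k => T (Fin.castLE hk0 a) (Fin.castLE hk0 b)).det := by
        rw [Fin.succAbove_last]
        set B : Matrix (Fin (k+1)) (Fin (k+1)) ℝ :=
          A.submatrix Fin.castSucc (⟨k, by omega⟩ : Fin (k+2)).succAbove with hB
        rw [Matrix.det_succ_column B (Fin.last k)]
        rw [Finset.sum_eq_single (Fin.last k)]
        · have c1 : B (Fin.last k) (Fin.last k) = -1 := by
            show T _ _ = _
            apply hTsup
            rw [Fin.succAbove_of_le_castSucc _ _ (by simp [Fin.le_def, Fin.last])]
            simp [Fin.last]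
          have c2 : (B.submatrix (Fin.last k).succAbove (Fin.last k).succAbove)
              = Matrix.of fun a b : Fin k => T (Fin.castLE hk0 a) (Fin.castLE hk0 b) := by
            rw [Fin.succAbove_last]
            have hcol : ∀ b : Fin k, (((⟨k, by omega⟩ : Fin (k+2)).succAbove b.castSucc) : ℕ) = b := by
              intro b
              rw [Fin.succAbove_of_castSucc_lt _ _ (by simp [Fin.lt_def])]
              simp
            ext a b
            show T _ _ = T _ _
            congr 1 <;> apply Fin.ext <;> simp [hcol]
          rw [c1, c2]
          have hs : ((-1:ℝ))^((Fin.last k : ℕ) + (Fin.last k : ℕ)) = 1 := by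
            show ((-1:ℝ))^(k+k) = 1
            rw [← two_mul, pow_mul]
            norm_num
          rw [hs]
          ring
        · intro b _ hb
          have hz : B b (Fin.last k) = 0 := by
            show T _ _ = _
            apply hT0
            · rw [Fin.succAbove_of_le_castSucc _ _ (by simp [Fin.le_def, Fin.last])]
              simp [Fin.last]
              have := b.isLt; omega
            · rw [Fin.succAbove_of_le_castSucc _ _ (by simp [Fin.le_def, Fin.last])]
              simp [Fin.last]
              have hbv : (b : ℕ) ≠ k := fun h => hb (Fin.ext (by simp [Fin.last, h]))
              omega
            · rw [Fin.succAbove_of_le_castSucc _ _ (by simp [Fin.le_def, Fin.last])]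
              simp [Fin.last]
              have := b.isLt; omega
          rw [hz]
          ring
        · intro h; exact absurd (Finset.mem_univ _) h
      rw [e1, e2, e3, e4]
      have s1 : ((-1:ℝ))^((Fin.last (k+1) : ℕ) + ((⟨k, by omega⟩ : Fin (k+2)) : ℕ)) = -1 := by
        show ((-1:ℝ))^(k+1+k) = -1
        rw [show k+1+k = 2*k+1 by omega, pow_succ, pow_mul]
        norm_num
      have s2 : ((-1:ℝ))^((Fin.last (k+1) : ℕ) + (Fin.last (k+1) : ℕ)) = 1 := by
        show ((-1:ℝ))^(k+1+(k+1)) = 1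
        rw [show k+1+(k+1) = 2*(k+1) by omega, pow_mul]
        norm_num
      rw [s1, s2]
      ring
    · intro j _ hj
      simp only [Finset.mem_insert, Finset.mem_singleton] at hj
      push_neg at hj
      obtain ⟨hj1, hj2⟩ := hj
      have hz : A (Fin.last (k+1)) j = 0 := by
        show T _ _ = _
        apply hT0
        · simp [Fin.last]
          exact fun h => hj1 (Fin.ext (by simp [h]))
        · simp [Fin.last]
          have := j.isLt; omega
        · simp [Fin.last]
          exact fun h => hj2 (Fin.ext (by simp [Fin.last, h.symm]))
      rw [hz]
      ring
  -- the minor sequence p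
  set p : ℕ → ℝ := fun m =>
    if h : m ≤ 2*n+1 then
      (Matrix.of fun a b : Fin m => T (Fin.castLE h a) (Fin.castLE h b)).det
    else 0 with hpdef
  have hp : ∀ (m : ℕ) (h : m ≤ 2*n+1),
      p m = (Matrix.of fun a b : Fin m => T (Fin.castLE h a) (Fin.castLE h b)).det := by
    intro m h
    simp only [hpdef]
    rw [dif_pos h]
  have hvp : ∀ i : Fin (2*n+1), v i = p (i : ℕ) := by
    intro i
    rw [hp _ i.isLt.le]
    exact hv i
  have hp0 : p 0 = 1 := by
    rw [hp 0 (by omega)]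
    exact Matrix.det_fin_zero
  have hp1 : ∀ i0 : Fin (2*n+1), (i0 : ℕ) = 0 → p 1 = T i0 i0 := by
    intro i0 hi0
    rw [hp 1 (by omega), Matrix.det_fin_one]
    show T _ _ = T i0 i0
    congr 1 <;> apply Fin.ext <;> simp [hi0]
  have hplast : p (2*n+1) = 0 := by
    rw [hp (2*n+1) le_rfl]
    have : (Matrix.of fun a b : Fin (2*n+1) =>
        T (Fin.castLE le_rfl a) (Fin.castLE le_rfl b)) = T := by
      ext a b
      show T _ _ = T a b
      congr 1 <;> apply Fin.ext <;> simp
    rw [this, hdet]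
  have hkey : ∀ (k : ℕ), k + 2 ≤ 2*n+1 → ∀ i1 : Fin (2*n+1), (i1 : ℕ) = k + 1 →
      p (k+2) = T i1 i1 * p (k+1) + p k := by
    intro k hk i1 hi1
    rw [hp (k+2) hk, hp (k+1) (by omega), hp k (by omega)]
    exact key k hk (by omega) (by omega) i1 hi1
  -- conclusions
  refine ⟨hdet, ?_, ?_⟩
  · intro h
    have h0 : v 0 = 0 := congrFun h 0
    rw [hvp 0] at h0
    have : ((0 : Fin (2*n+1)) : ℕ) = 0 := rfl
    rw [this, hp0] at h0
    norm_num at h0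
  · funext i
    show ∑ j, T i j * v j = 0
    rcases i with ⟨m, hm⟩
    rcases Nat.eq_zero_or_pos m with h0 | hpos
    · subst h0
      rw [← Finset.sum_subset (Finset.subset_univ
          ({⟨0, by omega⟩, ⟨1, by omega⟩} : Finset (Fin (2*n+1)))) ?_]
      · rw [Finset.sum_pair (Fin.ne_of_val_ne (show (0:ℕ) ≠ 1 by omega))]
        have e1 : v ⟨0, by omega⟩ = p 0 := hvp _
        have e2 : v ⟨1, by omega⟩ = p 1 := hvp _
        rw [e1, e2, hp0, hp1 ⟨0, by omega⟩ rfl,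
            hTsup ⟨0, hm⟩ ⟨1, by omega⟩ rfl]
        ring
      · intro j _ hj
        simp only [Finset.mem_insert, Finset.mem_singleton] at hj
        push_neg at hj
        obtain ⟨hj1, hj2⟩ := hj
        have hj1' : (j : ℕ) ≠ 0 := fun h => hj1 (Fin.ext h)
        have hj2' : (j : ℕ) ≠ 1 := fun h => hj2 (Fin.ext h)
        rw [hT0 _ _ (show (0:ℕ) ≠ (j:ℕ)+1 by omega) (show (j:ℕ) ≠ 0+1 by omega)
            (show (0:ℕ) ≠ (j:ℕ) by omega)]
        ring
    · obtain ⟨k, rfl⟩ : ∃ k, m = k + 1 := ⟨m - 1, by omega⟩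
      rcases Nat.lt_or_ge (k+2) (2*n+1) with hlt | hge
      · -- middle rows
        rw [← Finset.sum_subset (Finset.subset_univ
            ({⟨k, by omega⟩, ⟨k+1, by omega⟩, ⟨k+2, by omega⟩} : Finset (Fin (2*n+1)))) ?_]
        · rw [Finset.sum_insert (by
              simp only [Finset.mem_insert, Finset.mem_singleton]
              push_neg
              exact ⟨Fin.ne_of_val_ne (show k ≠ k+1 by omega),
                Fin.ne_of_val_ne (show k ≠ k+2 by omega)⟩),
            Finset.sum_pair (Fin.ne_of_val_ne (show k+1 ≠ k+2 by omega))]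
          have e1 : v ⟨k, by omega⟩ = p k := hvp _
          have e2 : v ⟨k+1, by omega⟩ = p (k+1) := hvp _
          have e3 : v ⟨k+2, by omega⟩ = p (k+2) := hvp _
          rw [e1, e2, e3, hTsub ⟨k+1, hm⟩ ⟨k, by omega⟩ rfl,
              hTsup ⟨k+1, hm⟩ ⟨k+2, by omega⟩ rfl,
              hkey k (by omega) ⟨k+1, hm⟩ rfl]
          ring
        · intro j _ hj
          simp only [Finset.mem_insert, Finset.mem_singleton] at hj
          push_neg at hj
          obtain ⟨hj1, hj2, hj3⟩ := hj
          have hj1' : (j : ℕ) ≠ k := fun h => hj1 (Fin.ext h)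
          have hj2' : (j : ℕ) ≠ k+1 := fun h => hj2 (Fin.ext h)
          have hj3' : (j : ℕ) ≠ k+2 := fun h => hj3 (Fin.ext h)
          rw [hT0 _ _ (show k+1 ≠ (j:ℕ)+1 by omega) (show (j:ℕ) ≠ (k+1)+1 by omega)
              (show k+1 ≠ (j:ℕ) by omega)]
          ring
      · -- last row : k + 2 = 2n+1
        have hk2 : k + 2 = 2*n+1 := by omega
        rw [← Finset.sum_subset (Finset.subset_univ
            ({⟨k, by omega⟩, ⟨k+1, by omega⟩} : Finset (Fin (2*n+1)))) ?_]
        · rw [Finset.sum_pair (Fin.ne_of_val_ne (show k ≠ k+1 by omega))]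
          have e1 : v ⟨k, by omega⟩ = p k := hvp _
          have e2 : v ⟨k+1, by omega⟩ = p (k+1) := hvp _
          rw [e1, e2, hTsub ⟨k+1, hm⟩ ⟨k, by omega⟩ rfl]
          have := hkey k (by omega) ⟨k+1, hm⟩ rfl
          rw [hk2] at this
          rw [hplast] at this
          linarith
        · intro j _ hj
          simp only [Finset.mem_insert, Finset.mem_singleton] at hj
          push_neg at hj
          obtain ⟨hj1, hj2⟩ := hj
          have hj1' : (j : ℕ) ≠ k := fun h => hj1 (Fin.ext h)
          have hj2' : (j : ℕ) ≠ k+1 := fun h => hj2 (Fin.ext h)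
          have hjlt := j.isLt
          rw [hT0 _ _ (show k+1 ≠ (j:ℕ)+1 by omega) (show (j:ℕ) ≠ (k+1)+1 by omega)
              (show k+1 ≠ (j:ℕ) by omega)]
          ring
end

section
/- Let Z be an m×n real matrix that is totally unimodular, i.e., every square submatrix of Z has determinant equal to −1, 0, or 1 (in particular every entry of Z lies in {−1,0,1}). Let r₁ ≠ r₂ be row indices and c₁ ≠ c₂ be column indices such that all four entries Z_{r₁c₁}, Z_{r₁c₂}, Z_{r₂c₁}, Z_{r₂c₂} are nonzero. Then the 2×2 minor vanishes exactly: Z_{r₁c₁}·Z_{r₂c₂} − Z_{r₁c₂}·Z_{r₂c₁} = 0. Consequently, in Gaussian elimination on a matrix A = D₁ Z D₂ with D₁, D₂ invertible diagonal matrices, whenever the pivot a_{kk} ≠ 0 and both operands a_{ij} and a_{ik}a_{kj}/a_{kk} in the update a'_{ij} = a_{ij} − a_{ik}a_{kj}/a_{kk} are nonzero, the result a'_{ij} is exactly 0. -/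
/-- For a totally unimodular matrix `Z`, any `2 × 2` submatrix with four nonzero entries
has vanishing determinant; consequently, in Gaussian elimination on a diagonally scaled
totally unimodular matrix `A = D₁ Z D₂`, whenever the pivot and both operands of the update
`a'_{ij} = a_{ij} - a_{ik} a_{kj} / a_{kk}` are nonzero, the result is exactly zero. -/
theorem stmt13 {m n : ℕ} (Z : Matrix (Fin m) (Fin n) ℝ)
    (hTU : ∀ (k : ℕ) (r : Fin k → Fin m) (c : Fin k → Fin n),
      Function.Injective r → Function.Injective c →
      (Z.submatrix r c).det = -1 ∨ (Z.submatrix r c).det = 0 ∨ (Z.submatrix r c).det = 1) :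
    (∀ (r₁ r₂ : Fin m) (c₁ c₂ : Fin n), r₁ ≠ r₂ → c₁ ≠ c₂ →
      Z r₁ c₁ ≠ 0 → Z r₁ c₂ ≠ 0 → Z r₂ c₁ ≠ 0 → Z r₂ c₂ ≠ 0 →
      Z r₁ c₁ * Z r₂ c₂ - Z r₁ c₂ * Z r₂ c₁ = 0) ∧
    (∀ (d₁ : Fin m → ℝ) (d₂ : Fin n → ℝ), (∀ i, d₁ i ≠ 0) → (∀ j, d₂ j ≠ 0) →
      ∀ A : Matrix (Fin m) (Fin n) ℝ, (∀ i j, A i j = d₁ i * Z i j * d₂ j) →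
      ∀ (i k : Fin m) (j l : Fin n), i ≠ k → j ≠ l →
        A k l ≠ 0 → A i j ≠ 0 → A i l * A k j / A k l ≠ 0 →
        A i j - A i l * A k j / A k l = 0) := by
  have hentry : ∀ (r : Fin m) (c : Fin n), Z r c = -1 ∨ Z r c = 0 ∨ Z r c = 1 := by
    intro r c
    have := hTU 1 (fun _ => r) (fun _ => c)
      (fun a b _ => Subsingleton.elim a b) (fun a b _ => Subsingleton.elim a b)
    simpa [Matrix.det_fin_one] using this
  have h1 : ∀ (r₁ r₂ : Fin m) (c₁ c₂ : Fin n), r₁ ≠ r₂ → c₁ ≠ c₂ →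
      Z r₁ c₁ ≠ 0 → Z r₁ c₂ ≠ 0 → Z r₂ c₁ ≠ 0 → Z r₂ c₂ ≠ 0 →
      Z r₁ c₁ * Z r₂ c₂ - Z r₁ c₂ * Z r₂ c₁ = 0 := by
    intro r₁ r₂ c₁ c₂ hr hc h11 h12 h21 h22
    have hrinj : Function.Injective ![r₁, r₂] := by
      intro a b hab
      fin_cases a <;> fin_cases b <;> simp_all
    have hcinj : Function.Injective ![c₁, c₂] := by
      intro a b hab
      fin_cases a <;> fin_cases b <;> simp_all
    have hdet := hTU 2 ![r₁, r₂] ![c₁, c₂] hrinj hcinj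
    rw [Matrix.det_fin_two] at hdet
    simp only [Matrix.submatrix_apply, Matrix.cons_val_zero, Matrix.cons_val_one,
      Matrix.head_cons] at hdet
    have pm : ∀ (r : Fin m) (c : Fin n), Z r c ≠ 0 → Z r c = -1 ∨ Z r c = 1 := by
      intro r c h
      rcases hentry r c with h' | h' | h' <;> tauto
    have ha : Z r₁ c₁ * Z r₂ c₂ = -1 ∨ Z r₁ c₁ * Z r₂ c₂ = 1 := by
      rcases pm r₁ c₁ h11 with h | h <;> rcases pm r₂ c₂ h22 with h' | h' <;>
        rw [h, h'] <;> norm_num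
    have hb : Z r₁ c₂ * Z r₂ c₁ = -1 ∨ Z r₁ c₂ * Z r₂ c₁ = 1 := by
      rcases pm r₁ c₂ h12 with h | h <;> rcases pm r₂ c₁ h21 with h' | h' <;>
        rw [h, h'] <;> norm_num
    rcases ha with h | h <;> rcases hb with h' | h' <;> rw [h, h'] <;>
      rw [h, h'] at hdet <;> rcases hdet with h'' | h'' | h'' <;> linarith
  refine ⟨h1, ?_⟩
  intro d₁ d₂ hd₁ hd₂ A hA i k j l hik hjl hkl hij hop
  have hAij := hA i j
  have hAil := hA i l
  have hAkj := hA k j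
  have hAkl := hA k l
  have hZkl : Z k l ≠ 0 := by
    intro h; apply hkl; rw [hAkl, h]; ring
  have hZij : Z i j ≠ 0 := by
    intro h; apply hij; rw [hAij, h]; ring
  have hZil : Z i l ≠ 0 := by
    intro h; apply hop; rw [hAil, h]; simp
  have hZkj : Z k j ≠ 0 := by
    intro h; apply hop; rw [hAkj, h]; simp
  have key := h1 i k j l hik hjl hZij hZil hZkj hZkl
  have heq : A i l * A k j / A k l = A i j := by
    rw [hAij, hAil, hAkj, hAkl, div_eq_iff (by rw [← hAkl]; exact hkl)]
    linear_combination (-(d₁ i * d₂ l * d₁ k * d₂ j)) * key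
  rw [heq, sub_self]
end

section
/- Let A be an n×n real matrix with n ≥ 2 such that a_{ij} ≤ 0 for all i ≠ j and all row sums s_i := Σ_{j=1}^n a_{ij} are nonnegative (so A is a row diagonally dominant M-matrix), and suppose a_{11} > 0. Then the Schur complement S of a_{11} in A, defined by S_{ij} = a_{ij} − a_{i1}a_{1j}/a_{11} for 2 ≤ i,j ≤ n, is again a row diagonally dominant M-matrix; explicitly, writing b_{ij} := −a_{ij} ≥ 0 for i ≠ j: (i) the off-diagonal entries of S satisfy −S_{ij} = b_{ij} + (b_{i1}/a_{11})·b_{1j} ≥ 0 for i ≠ j; and (ii) the row sums of S satisfy s'_i = s_i + (b_{i1}/a_{11})·s₁ ≥ 0 for each i ≥ 2. -/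
/-- The Schur complement of the `(1,1)` entry of a row diagonally dominant M-matrix is
again a row diagonally dominant M-matrix: its off-diagonal entries satisfy
`-S i j = b_{ij} + (b_{i1}/a_{11}) b_{1j} ≥ 0`, and its row sums satisfy
`s'_i = s_i + (b_{i1}/a_{11}) s₁ ≥ 0`. Here the matrix has size `n + 2 ≥ 2`. -/
theorem stmt14 {n : ℕ} (A : Matrix (Fin (n + 2)) (Fin (n + 2)) ℝ)
    (hoff : ∀ i j, i ≠ j → A i j ≤ 0)
    (hrows : ∀ i, 0 ≤ ∑ j, A i j)
    (h11 : 0 < A 0 0)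
    (S : Matrix (Fin (n + 2)) (Fin (n + 2)) ℝ)
    (hS : ∀ i j, S i j = A i j - A i 0 * A 0 j / A 0 0) :
    (∀ i j, i ≠ 0 → j ≠ 0 → i ≠ j →
      -S i j = (-A i j) + (-A i 0 / A 0 0) * (-A 0 j) ∧ 0 ≤ -S i j) ∧
    (∀ i, i ≠ 0 →
      (∑ j ∈ Finset.univ.erase 0, S i j) =
        (∑ j, A i j) + (-A i 0 / A 0 0) * (∑ j, A 0 j) ∧
      0 ≤ ∑ j ∈ Finset.univ.erase 0, S i j) := by
  have h11ne : A 0 0 ≠ 0 := ne_of_gt h11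
  constructor
  · intro i j hi hj hij
    have heq : -S i j = (-A i j) + (-A i 0 / A 0 0) * (-A 0 j) := by
      rw [hS]; field_simp; ring
    refine ⟨heq, ?_⟩
    rw [heq]
    have h1 : (0:ℝ) ≤ -A i j := neg_nonneg.mpr (hoff i j hij)
    have h2 : (0:ℝ) ≤ -A i 0 / A 0 0 :=
      div_nonneg (neg_nonneg.mpr (hoff i 0 hi)) h11.le
    have h3 : (0:ℝ) ≤ -A 0 j := neg_nonneg.mpr (hoff 0 j (Ne.symm hj))
    positivity
  · intro i hi
    have key : (∑ j ∈ Finset.univ.erase 0, S i j) =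
        (∑ j, A i j) + (-A i 0 / A 0 0) * (∑ j, A 0 j) := by
      have hsplit : ∀ (B : Matrix (Fin (n+2)) (Fin (n+2)) ℝ) (k : Fin (n+2)),
          ∑ j, B k j = B k 0 + ∑ j ∈ Finset.univ.erase 0, B k j := by
        intro B k
        rw [← Finset.add_sum_erase _ _ (Finset.mem_univ 0)]
      have : ∑ j ∈ Finset.univ.erase 0, S i j
          = ∑ j ∈ Finset.univ.erase 0, (A i j - A i 0 * A 0 j / A 0 0) := by
        exact Finset.sum_congr rfl fun j _ => hS i j
      rw [this, Finset.sum_sub_distrib]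
      have hA : ∑ j ∈ Finset.univ.erase 0, A i j = (∑ j, A i j) - A i 0 := by
        rw [hsplit A i]; ring
      have hA0 : ∑ j ∈ Finset.univ.erase 0, A 0 j = (∑ j, A 0 j) - A 0 0 := by
        rw [hsplit A 0]; ring
      have : ∑ j ∈ Finset.univ.erase 0, A i 0 * A 0 j / A 0 0
          = A i 0 / A 0 0 * ((∑ j, A 0 j) - A 0 0) := by
        rw [← hA0, Finset.mul_sum]
        exact Finset.sum_congr rfl fun j _ => by ring
      rw [this, hA]
      field_simp
      ring
    refine ⟨key, ?_⟩
    rw [key]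
    have h2 : (0:ℝ) ≤ -A i 0 / A 0 0 :=
      div_nonneg (neg_nonneg.mpr (hoff i 0 hi)) h11.le
    have := hrows i
    have := hrows 0
    positivity
end

section
/- Let u, v ∈ ℝⁿ (or ℂⁿ) and let d, t be vectors of scalars with d_i − t_j ≠ 0 for all i, j, and define the quasi-Cauchy matrix a_{ij} = u_i v_j / (d_i − t_j). Fix an index k with u_k ≠ 0 and v_k ≠ 0 (so a_{kk} ≠ 0). Then for all i ≠ k and j ≠ k, the Schur complement entry satisfies a_{ij} − a_{ik}a_{kj}/a_{kk} = a_{ij} · (d_i − d_k)(t_k − t_j) / ((d_k − t_j)(d_i − t_k)). In particular, the Schur complement of a quasi-Cauchy matrix is again quasi-Cauchy: its (i,j) entry equals u'_i v'_j/(d_i − t_j) with u'_i = u_i(d_i − d_k)/(d_i − t_k) and v'_j = v_j(t_k − t_j)/(d_k − t_j). -/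
/-- The Schur complement of a quasi-Cauchy matrix `a i j = u i * v j / (d i - t j)` with
pivot `(k, k)` is again quasi-Cauchy: the updated entry equals
`a i j * (d i - d k)(t k - t j) / ((d k - t j)(d i - t k))`, which is
`u' i * v' j / (d i - t j)` with `u' i = u i (d i - d k)/(d i - t k)` and
`v' j = v j (t k - t j)/(d k - t j)`. Stated over an arbitrary field, covering `ℝ` and `ℂ`. -/
theorem stmt15 {K : Type*} [Field K] {n : ℕ}
    (u v d t : Fin n → K)
    (hdt : ∀ i j, d i - t j ≠ 0)
    (a : Matrix (Fin n) (Fin n) K)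
    (ha : ∀ i j, a i j = u i * v j / (d i - t j))
    (k : Fin n) (hu : u k ≠ 0) (hv : v k ≠ 0) :
    ∀ i j, i ≠ k → j ≠ k →
      a i j - a i k * a k j / a k k =
        a i j * ((d i - d k) * (t k - t j)) / ((d k - t j) * (d i - t k)) ∧
      a i j - a i k * a k j / a k k =
        (u i * (d i - d k) / (d i - t k)) * (v j * (t k - t j) / (d k - t j)) /
          (d i - t j) := by
  intro i j hi hj
  have h1 := hdt i j
  have h2 := hdt i k
  have h3 := hdt k j
  have h4 := hdt k k
  rw [ha i j, ha i k, ha k j, ha k k]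
  constructor <;> field_simp <;> ring
end
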